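/- arXiv:2603.02307 — 2 statements merged into one kernel-verified Lean document; each statement's English description precedes it below -/
import Mathlib

section
/- Let a : (0,∞) → (0,∞) be the FLRW scale factor expressed in conformal time, and let □_g φ = −a^{−2}∂_τ²φ − 2(∂_τa/a³)∂_τφ + a^{−2}Δφ. Then for every smooth φ : (0,∞) × ℝ³ → ℝ and every j ∈ {1,2,3}: [□_g, Ω_{0j}]φ = −x^j [□_g, ∂_τ]φ + 2(∂_τ a / a³) ∂_j φ, where Ω_{0j} = −τ ∂_j − x^j ∂_τ is the boost vector field. -/
open Real Set

noncomputable section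

/-- Scalar fields on `ℝ × ℝ³`, first coordinate: conformal time `τ`. -/
abbrev Fld : Type := ℝ → (Fin 3 → ℝ) → ℝ

/-- Partial derivative `∂_τ` in the (conformal) time variable. -/
def dτ (φ : Fld) : Fld := fun τ x => deriv (fun s => φ s x) τ

/-- Partial derivative in the `i`-th spatial variable. -/
def dx (i : Fin 3) (φ : Fld) : Fld :=
  fun τ x => deriv (fun s => φ τ (Function.update x i s)) (x i)

/-- Euclidean Laplacian in the spatial variables. -/
def lap (φ : Fld) : Fld := fun τ x => ∑ i, dx i (dx i φ) τ x

/-- FLRW wave operator in conformal time: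
`□_g φ = −a^{−2}∂_τ²φ − 2(∂_τa/a³)∂_τφ + a^{−2}Δφ`. -/
def boxc (a : ℝ → ℝ) (φ : Fld) : Fld := fun τ x =>
  -(((a τ) ^ 2)⁻¹ * dτ (dτ φ) τ x) - 2 * (deriv a τ / (a τ) ^ 3) * dτ φ τ x
    + ((a τ) ^ 2)⁻¹ * lap φ τ x

/-- Smoothness of a spacetime field on a (conformal) time interval. -/
def FSmoothOn (s : Set ℝ) (φ : Fld) : Prop :=
  ContDiffOn ℝ (⊤ : ℕ∞) (fun q : ℝ × (Fin 3 → ℝ) => φ q.1 q.2) (s ×ˢ (univ : Set (Fin 3 → ℝ)))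

/-! The boost `Ω_{0j} = −τ∂_j − x^j∂_τ` has coefficients `τ` and `x^j`, so the commutator only
sees how `□_g` acts on products with them:
`□_g(τψ) = τ□_gψ − 2a⁻²∂_τψ − 2(∂_τa/a³)ψ` and `□_g(x^jψ) = x^j□_gψ + 2a⁻²∂_jψ`.
The coefficients of `□_g` depend on `τ` only, so `□_g` commutes with `∂_j`; as partial derivatives
of a smooth field commute, the two `a⁻²∂_τ∂_jφ` terms cancel and `2(∂_τa/a³)∂_jφ` is what is left.
The terms `x^j∂_τ□_gφ` occur on both sides and cancel. -/

open Function
open scoped ContDiff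

theorem ContDiffAt.fderiv_apply_comm {E F : Type*} [NormedAddCommGroup E] [NormedSpace ℝ E]
    [NormedAddCommGroup F] [NormedSpace ℝ F] {f : E → F} {q : E} (hf : ContDiffAt ℝ 2 f q)
    (v w : E) :
    fderiv ℝ (fun p => fderiv ℝ f p w) q v = fderiv ℝ (fun p => fderiv ℝ f p v) q w := by
  have hd : DifferentiableAt ℝ (fderiv ℝ f) q :=
    (hf.fderiv_right (m := 1) le_rfl).differentiableAt one_ne_zero
  rw [fderiv_clm_apply hd (differentiableAt_const w),
    fderiv_clm_apply hd (differentiableAt_const v)]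
  simpa using hf.isSymmSndFDerivAt (by simp) v w

section FieldCalculus

variable {s : Set ℝ} {φ ψ₁ ψ₂ : Fld} {τ : ℝ}

lemma FSmoothOn.contDiffAt_uncurry (hs : IsOpen s) (hφ : FSmoothOn s φ) (hτ : τ ∈ s)
    (x : Fin 3 → ℝ) : ContDiffAt ℝ ∞ (uncurry φ) (τ, x) :=
  ContDiffOn.contDiffAt hφ ((hs.prod isOpen_univ).mem_nhds ⟨hτ, mem_univ x⟩)

lemma FSmoothOn.fderiv_apply (hs : IsOpen s) (hφ : FSmoothOn s φ) (v : ℝ × (Fin 3 → ℝ)) :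
    ContDiffOn ℝ ∞ (fun q => fderiv ℝ (uncurry φ) q v) (s ×ˢ univ) :=
  (ContDiffOn.fderiv_of_isOpen hφ (hs.prod isOpen_univ) (by simp)).clm_apply contDiffOn_const

lemma FSmoothOn.hasDerivAt_time_slice (hs : IsOpen s) (hφ : FSmoothOn s φ) (hτ : τ ∈ s)
    (x : Fin 3 → ℝ) : HasDerivAt (fun σ => φ σ x) (fderiv ℝ (uncurry φ) (τ, x) (1, 0)) τ := by
  have h := ((hφ.contDiffAt_uncurry hs hτ x).differentiableAt (by simp)).hasFDerivAt.comp_hasDerivAt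
    τ ((hasDerivAt_id τ).prodMk (hasDerivAt_const τ x))
  exact h

lemma FSmoothOn.hasDerivAt_space_slice (hs : IsOpen s) (hφ : FSmoothOn s φ) (hτ : τ ∈ s)
    (x : Fin 3 → ℝ) (i : Fin 3) :
    HasDerivAt (fun r => φ τ (update x i r)) (fderiv ℝ (uncurry φ) (τ, x) (0, Pi.single i 1))
      (x i) := by
  have hφx : HasFDerivAt (uncurry φ) (fderiv ℝ (uncurry φ) (τ, x)) (τ, update x i (x i)) := by
    rw [update_eq_self]
    exact ((hφ.contDiffAt_uncurry hs hτ x).differentiableAt (by simp)).hasFDerivAt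
  exact hφx.comp_hasDerivAt (x i) ((hasDerivAt_const (x i) τ).prodMk (hasDerivAt_update x i (x i)))

lemma FSmoothOn.dτ_eq_fderiv (hs : IsOpen s) (hφ : FSmoothOn s φ) (hτ : τ ∈ s)
    (x : Fin 3 → ℝ) : dτ φ τ x = fderiv ℝ (uncurry φ) (τ, x) (1, 0) :=
  (hφ.hasDerivAt_time_slice hs hτ x).deriv

lemma FSmoothOn.dx_eq_fderiv (hs : IsOpen s) (hφ : FSmoothOn s φ) (hτ : τ ∈ s)
    (x : Fin 3 → ℝ) (i : Fin 3) : dx i φ τ x = fderiv ℝ (uncurry φ) (τ, x) (0, Pi.single i 1) :=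
  (hφ.hasDerivAt_space_slice hs hτ x i).deriv

lemma FSmoothOn.hasDerivAt_dτ (hs : IsOpen s) (hφ : FSmoothOn s φ) (hτ : τ ∈ s)
    (x : Fin 3 → ℝ) : HasDerivAt (fun σ => φ σ x) (dτ φ τ x) τ :=
  (hφ.hasDerivAt_time_slice hs hτ x).differentiableAt.hasDerivAt

lemma FSmoothOn.hasDerivAt_dx (hs : IsOpen s) (hφ : FSmoothOn s φ) (hτ : τ ∈ s)
    (x : Fin 3 → ℝ) (i : Fin 3) : HasDerivAt (fun r => φ τ (update x i r)) (dx i φ τ x) (x i) :=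
  (hφ.hasDerivAt_space_slice hs hτ x i).differentiableAt.hasDerivAt

lemma fSmoothOn_dτ (hs : IsOpen s) (hφ : FSmoothOn s φ) : FSmoothOn s (dτ φ) :=
  (hφ.fderiv_apply hs (1, 0)).congr fun q hq => hφ.dτ_eq_fderiv hs hq.1 q.2

lemma fSmoothOn_dx (hs : IsOpen s) (hφ : FSmoothOn s φ) (i : Fin 3) : FSmoothOn s (dx i φ) :=
  (hφ.fderiv_apply hs _).congr fun q hq => hφ.dx_eq_fderiv hs hq.1 q.2 i

lemma fSmoothOn_lap (hs : IsOpen s) (hφ : FSmoothOn s φ) : FSmoothOn s (lap φ) :=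
  ContDiffOn.sum fun i _ => fSmoothOn_dx hs (fSmoothOn_dx hs hφ i) i

lemma FSmoothOn.fderiv_uncurry_dτ (hs : IsOpen s) (hφ : FSmoothOn s φ) (hτ : τ ∈ s)
    (x : Fin 3 → ℝ) :
    fderiv ℝ (uncurry (dτ φ)) (τ, x) = fderiv ℝ (fun q => fderiv ℝ (uncurry φ) q (1, 0)) (τ, x) :=
  Filter.EventuallyEq.fderiv_eq <| EqOn.eventuallyEq_of_mem
    (fun q hq => hφ.dτ_eq_fderiv hs hq.1 q.2) ((hs.prod isOpen_univ).mem_nhds ⟨hτ, mem_univ x⟩)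

lemma FSmoothOn.fderiv_uncurry_dx (hs : IsOpen s) (hφ : FSmoothOn s φ) (hτ : τ ∈ s)
    (x : Fin 3 → ℝ) (i : Fin 3) :
    fderiv ℝ (uncurry (dx i φ)) (τ, x)
      = fderiv ℝ (fun q => fderiv ℝ (uncurry φ) q (0, Pi.single i 1)) (τ, x) :=
  Filter.EventuallyEq.fderiv_eq <| EqOn.eventuallyEq_of_mem
    (fun q hq => hφ.dx_eq_fderiv hs hq.1 q.2 i) ((hs.prod isOpen_univ).mem_nhds ⟨hτ, mem_univ x⟩)

lemma FSmoothOn.dx_dτ_comm (hs : IsOpen s) (hφ : FSmoothOn s φ) (hτ : τ ∈ s)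
    (x : Fin 3 → ℝ) (i : Fin 3) : dx i (dτ φ) τ x = dτ (dx i φ) τ x := by
  rw [(fSmoothOn_dτ hs hφ).dx_eq_fderiv hs hτ, (fSmoothOn_dx hs hφ i).dτ_eq_fderiv hs hτ,
    hφ.fderiv_uncurry_dτ hs hτ, hφ.fderiv_uncurry_dx hs hτ]
  exact ((hφ.contDiffAt_uncurry hs hτ x).of_le ENat.LEInfty.out).fderiv_apply_comm _ _

lemma FSmoothOn.dx_dx_comm (hs : IsOpen s) (hφ : FSmoothOn s φ) (hτ : τ ∈ s)
    (x : Fin 3 → ℝ) (i k : Fin 3) : dx i (dx k φ) τ x = dx k (dx i φ) τ x := by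
  rw [(fSmoothOn_dx hs hφ k).dx_eq_fderiv hs hτ, (fSmoothOn_dx hs hφ i).dx_eq_fderiv hs hτ,
    hφ.fderiv_uncurry_dx hs hτ, hφ.fderiv_uncurry_dx hs hτ]
  exact ((hφ.contDiffAt_uncurry hs hτ x).of_le ENat.LEInfty.out).fderiv_apply_comm _ _

lemma dτ_congr (hs : IsOpen s) (h : ∀ σ ∈ s, ∀ y, ψ₁ σ y = ψ₂ σ y) (hτ : τ ∈ s)
    (x : Fin 3 → ℝ) : dτ ψ₁ τ x = dτ ψ₂ τ x :=
  Filter.EventuallyEq.deriv_eq (Filter.eventually_of_mem (hs.mem_nhds hτ) fun σ hσ => h σ hσ x)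

lemma dx_congr (h : ∀ y, ψ₁ τ y = ψ₂ τ y) (x : Fin 3 → ℝ) (i : Fin 3) :
    dx i ψ₁ τ x = dx i ψ₂ τ x := by
  simp only [dx, h]

end FieldCalculus

section WaveOperator

variable {s : Set ℝ} {ψ ψ₁ ψ₂ : Fld} {τ : ℝ}

lemma FSmoothOn.neg (hψ : FSmoothOn s ψ) : FSmoothOn s (fun σ y => -ψ σ y) :=
  ContDiffOn.neg hψ

lemma FSmoothOn.time_mul (hψ : FSmoothOn s ψ) : FSmoothOn s (fun σ y => σ * ψ σ y) :=
  contDiffOn_fst.mul hψ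

lemma FSmoothOn.coord_mul (hψ : FSmoothOn s ψ) (j : Fin 3) :
    FSmoothOn s (fun σ y => y j * ψ σ y) :=
  ((contDiff_apply ℝ ℝ j).comp contDiff_snd).contDiffOn.mul hψ

lemma dτ_neg (ψ : Fld) : dτ (fun σ y => -ψ σ y) = fun σ y => -dτ ψ σ y := by
  funext σ y; exact deriv.fun_neg

lemma dx_neg (i : Fin 3) (ψ : Fld) : dx i (fun σ y => -ψ σ y) = fun σ y => -dx i ψ σ y := by
  funext σ y; exact deriv.fun_neg

lemma dx_time_mul (i : Fin 3) (ψ : Fld) :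
    dx i (fun σ y => σ * ψ σ y) = fun σ y => σ * dx i ψ σ y := by
  funext σ y; exact deriv_const_mul_field σ

lemma dτ_coord_mul (j : Fin 3) (ψ : Fld) :
    dτ (fun σ y => y j * ψ σ y) = fun σ y => y j * dτ ψ σ y := by
  funext σ y; exact deriv_const_mul_field (y j)

lemma dτ_sub (hs : IsOpen s) (hψ₁ : FSmoothOn s ψ₁) (hψ₂ : FSmoothOn s ψ₂) (hτ : τ ∈ s)
    (x : Fin 3 → ℝ) : dτ (fun σ y => ψ₁ σ y - ψ₂ σ y) τ x = dτ ψ₁ τ x - dτ ψ₂ τ x :=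
  ((hψ₁.hasDerivAt_dτ hs hτ x).sub (hψ₂.hasDerivAt_dτ hs hτ x)).deriv

lemma dx_sub (hs : IsOpen s) (hψ₁ : FSmoothOn s ψ₁) (hψ₂ : FSmoothOn s ψ₂) (hτ : τ ∈ s)
    (x : Fin 3 → ℝ) (i : Fin 3) :
    dx i (fun σ y => ψ₁ σ y - ψ₂ σ y) τ x = dx i ψ₁ τ x - dx i ψ₂ τ x :=
  ((hψ₁.hasDerivAt_dx hs hτ x i).sub (hψ₂.hasDerivAt_dx hs hτ x i)).deriv

lemma FSmoothOn.hasDerivAt_time_mul (hs : IsOpen s) (hψ : FSmoothOn s ψ) (hτ : τ ∈ s)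
    (x : Fin 3 → ℝ) : HasDerivAt (fun σ => σ * ψ σ x) (ψ τ x + τ * dτ ψ τ x) τ := by
  simpa using (hasDerivAt_id τ).fun_mul (hψ.hasDerivAt_dτ hs hτ x)

lemma FSmoothOn.hasDerivAt_coord_mul (hs : IsOpen s) (hψ : FSmoothOn s ψ) (hτ : τ ∈ s)
    (x : Fin 3 → ℝ) (i j : Fin 3) :
    HasDerivAt (fun r => update x i r j * ψ τ (update x i r))
      ((Pi.single i 1 : Fin 3 → ℝ) j * ψ τ x + x j * dx i ψ τ x) (x i) := by
  simpa using
    (hasDerivAt_pi.mp (hasDerivAt_update x i (x i)) j).fun_mul (hψ.hasDerivAt_dx hs hτ x i)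

lemma lap_coord_mul (hs : IsOpen s) (hψ : FSmoothOn s ψ) (hτ : τ ∈ s) (x : Fin 3 → ℝ)
    (j : Fin 3) : lap (fun σ y => y j * ψ σ y) τ x = x j * lap ψ τ x + 2 * dx j ψ τ x := by
  have hxx : ∀ i, dx i (dx i (fun σ y => y j * ψ σ y)) τ x
      = 2 * ((Pi.single i 1 : Fin 3 → ℝ) j * dx i ψ τ x) + x j * dx i (dx i ψ) τ x := by
    intro i
    rw [dx_congr (ψ₂ := fun _ y => (Pi.single i 1 : Fin 3 → ℝ) j * ψ τ y + y j * dx i ψ τ y)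
      (fun y => (hψ.hasDerivAt_coord_mul hs hτ y i j).deriv) x i]
    have h := ((hψ.hasDerivAt_dx hs hτ x i).const_mul ((Pi.single i 1 : Fin 3 → ℝ) j)).fun_add
      ((fSmoothOn_dx hs hψ i).hasDerivAt_coord_mul hs hτ x i j)
    exact h.deriv.trans (by ring)
  simp only [lap, hxx, Finset.sum_add_distrib, ← Finset.mul_sum]
  simp [Pi.single_apply, add_comm]

lemma boxc_neg (a : ℝ → ℝ) (ψ : Fld) (τ : ℝ) (x : Fin 3 → ℝ) :
    boxc a (fun σ y => -ψ σ y) τ x = -boxc a ψ τ x := by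
  simp only [boxc, lap, dτ_neg, dx_neg, Finset.sum_neg_distrib]
  ring

lemma boxc_sub (a : ℝ → ℝ) (hs : IsOpen s) (hψ₁ : FSmoothOn s ψ₁) (hψ₂ : FSmoothOn s ψ₂)
    (hτ : τ ∈ s) (x : Fin 3 → ℝ) :
    boxc a (fun σ y => ψ₁ σ y - ψ₂ σ y) τ x = boxc a ψ₁ τ x - boxc a ψ₂ τ x := by
  have hττ : dτ (dτ (fun σ y => ψ₁ σ y - ψ₂ σ y)) τ x = dτ (dτ ψ₁) τ x - dτ (dτ ψ₂) τ x := by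
    rw [dτ_congr (ψ₂ := fun σ y => dτ ψ₁ σ y - dτ ψ₂ σ y) hs
      (fun σ hσ y => dτ_sub hs hψ₁ hψ₂ hσ y) hτ x]
    exact dτ_sub hs (fSmoothOn_dτ hs hψ₁) (fSmoothOn_dτ hs hψ₂) hτ x
  have hxx : ∀ i, dx i (dx i (fun σ y => ψ₁ σ y - ψ₂ σ y)) τ x
      = dx i (dx i ψ₁) τ x - dx i (dx i ψ₂) τ x := by
    intro i
    rw [dx_congr (ψ₂ := fun _ y => dx i ψ₁ τ y - dx i ψ₂ τ y)
      (fun y => dx_sub hs hψ₁ hψ₂ hτ y i) x i]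
    exact dx_sub hs (fSmoothOn_dx hs hψ₁ i) (fSmoothOn_dx hs hψ₂ i) hτ x i
  simp only [boxc, lap, hττ, hxx, dτ_sub hs hψ₁ hψ₂ hτ x, Finset.sum_sub_distrib]
  ring

lemma boxc_time_mul (a : ℝ → ℝ) (hs : IsOpen s) (hψ : FSmoothOn s ψ) (hτ : τ ∈ s)
    (x : Fin 3 → ℝ) :
    boxc a (fun σ y => σ * ψ σ y) τ x
      = τ * boxc a ψ τ x - 2 * (a τ ^ 2)⁻¹ * dτ ψ τ x - 2 * (deriv a τ / a τ ^ 3) * ψ τ x := by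
  have hτ₁ : dτ (fun σ y => σ * ψ σ y) τ x = ψ τ x + τ * dτ ψ τ x :=
    (hψ.hasDerivAt_time_mul hs hτ x).deriv
  have hτ₂ : dτ (dτ (fun σ y => σ * ψ σ y)) τ x
      = dτ ψ τ x + (dτ ψ τ x + τ * dτ (dτ ψ) τ x) := by
    rw [dτ_congr (ψ₁ := dτ fun σ y => σ * ψ σ y) (ψ₂ := fun σ y => ψ σ y + σ * dτ ψ σ y) hs
      (fun σ hσ y => (hψ.hasDerivAt_time_mul hs hσ y).deriv) hτ x]
    exact ((hψ.hasDerivAt_dτ hs hτ x).fun_add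
      ((fSmoothOn_dτ hs hψ).hasDerivAt_time_mul hs hτ x)).deriv
  simp only [boxc, lap, dx_time_mul, hτ₁, hτ₂, ← Finset.mul_sum]
  ring

lemma boxc_coord_mul (a : ℝ → ℝ) (hs : IsOpen s) (hψ : FSmoothOn s ψ) (hτ : τ ∈ s)
    (x : Fin 3 → ℝ) (j : Fin 3) :
    boxc a (fun σ y => y j * ψ σ y) τ x = x j * boxc a ψ τ x + 2 * (a τ ^ 2)⁻¹ * dx j ψ τ x := by
  simp only [boxc, lap_coord_mul hs hψ hτ x j, dτ_coord_mul]
  ring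

lemma FSmoothOn.dx_lap_comm (hs : IsOpen s) (hψ : FSmoothOn s ψ) (hτ : τ ∈ s)
    (x : Fin 3 → ℝ) (j : Fin 3) : dx j (lap ψ) τ x = lap (dx j ψ) τ x := by
  have h := HasDerivAt.fun_sum (u := Finset.univ) fun i _ =>
    (fSmoothOn_dx hs (fSmoothOn_dx hs hψ i) i).hasDerivAt_dx hs hτ x j
  refine h.deriv.trans (Finset.sum_congr rfl fun i _ => ?_)
  rw [(fSmoothOn_dx hs hψ i).dx_dx_comm hs hτ x j i,
    dx_congr (ψ₂ := dx i (dx j ψ)) (fun y => hψ.dx_dx_comm hs hτ y j i) x i]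

lemma FSmoothOn.dx_boxc_comm (a : ℝ → ℝ) (hs : IsOpen s) (hψ : FSmoothOn s ψ) (hτ : τ ∈ s)
    (x : Fin 3 → ℝ) (j : Fin 3) : dx j (boxc a ψ) τ x = boxc a (dx j ψ) τ x := by
  have hψτ := fSmoothOn_dτ hs hψ
  have hdττ := ((fSmoothOn_dτ hs hψτ).hasDerivAt_dx hs hτ x j).const_mul (a τ ^ 2)⁻¹
  have hdτ := (hψτ.hasDerivAt_dx hs hτ x j).const_mul (2 * (deriv a τ / a τ ^ 3))
  have hdlap := ((fSmoothOn_lap hs hψ).hasDerivAt_dx hs hτ x j).const_mul (a τ ^ 2)⁻¹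
  have hcomm : dx j (dτ (dτ ψ)) τ x = dτ (dτ (dx j ψ)) τ x := by
    rw [hψτ.dx_dτ_comm hs hτ x j,
      dτ_congr (ψ₂ := dτ (dx j ψ)) hs (fun σ hσ y => hψ.dx_dτ_comm hs hσ y j) hτ x]
  refine ((hdττ.fun_neg.fun_sub hdτ).fun_add hdlap).deriv.trans ?_
  rw [boxc, hcomm, hψ.dx_dτ_comm hs hτ x j, hψ.dx_lap_comm hs hτ x j]

end WaveOperator

theorem stmt9_general (a : ℝ → ℝ) (φ : Fld) (hφ : FSmoothOn (Set.Ioi 0) φ) :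
    ∀ j : Fin 3, ∀ τ > (0 : ℝ), ∀ x : Fin 3 → ℝ,
      boxc a (fun σ y => -(σ * dx j φ σ y) - y j * dτ φ σ y) τ x
          - (-(τ * dx j (boxc a φ) τ x) - x j * dτ (boxc a φ) τ x)
        = -(x j) * (boxc a (dτ φ) τ x - dτ (boxc a φ) τ x)
          + 2 * (deriv a τ / (a τ) ^ 3) * dx j φ τ x := by
  intro j τ hτ x
  have hs : IsOpen (Ioi (0 : ℝ)) := isOpen_Ioi
  have hφj := fSmoothOn_dx hs hφ j
  have hφτ := fSmoothOn_dτ hs hφ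
  have hboost : boxc a (fun σ y => -(σ * dx j φ σ y) - y j * dτ φ σ y) τ x
      = -(τ * boxc a (dx j φ) τ x) + 2 * (deriv a τ / a τ ^ 3) * dx j φ τ x
        - x j * boxc a (dτ φ) τ x := by
    rw [boxc_sub a hs hφj.time_mul.neg (hφτ.coord_mul j) hτ x, boxc_neg,
      boxc_time_mul a hs hφj hτ x, boxc_coord_mul a hs hφτ hτ x j, hφ.dx_dτ_comm hs hτ x j]
    ring
  rw [hboost, hφ.dx_boxc_comm a hs hτ x j]
  ring

/-- `[□_g, Ω_{0j}]φ = −x^j [□_g, ∂_τ]φ + 2(∂_τa/a³)∂_jφ`,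
where `Ω_{0j} = −τ∂_j − x^j∂_τ`. -/
theorem stmt9 (a : ℝ → ℝ) (ha : ContDiffOn ℝ (⊤ : ℕ∞) a (Set.Ioi 0))
    (hapos : ∀ τ > (0 : ℝ), 0 < a τ)
    (φ : Fld) (hφ : FSmoothOn (Set.Ioi 0) φ) :
    ∀ j : Fin 3, ∀ τ > (0 : ℝ), ∀ x : Fin 3 → ℝ,
      boxc a (fun σ y => -(σ * dx j φ σ y) - y j * dτ φ σ y) τ x
          - (-(τ * dx j (boxc a φ) τ x) - x j * dτ (boxc a φ) τ x)
        = -(x j) * (boxc a (dτ φ) τ x - dτ (boxc a φ) τ x)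
          + 2 * (deriv a τ / (a τ) ^ 3) * dx j φ τ x :=
  stmt9_general a φ hφ

end
end

section
/- Let a : (0,∞) → (0,∞) be the FLRW scale factor expressed in conformal time, and let □_g φ = −a^{−2}∂_τ²φ − 2(∂_τa/a³)∂_τφ + a^{−2}Δφ. Then for every smooth φ : (0,∞) × ℝ³ → ℝ: [□_g, S]φ = 2(1 + τ ∂_τ a / a) □_g φ + 2( ∂_τ a / a³ + τ (a ∂_τ² a − (∂_τ a)²) a^{−4} ) ∂_τ φ, where S = τ ∂_τ + x^i ∂_i is the scaling vector field (with summation over i = 1,2,3). -/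
open Real Set

noncomputable section

/-!
The scaling field `S = τ ∂_τ + xⁱ ∂_i` is the Euler field `S f (q) = Df(q) q`. By symmetry of
second derivatives `[∂_v, S] = ∂_v` for every constant vector `v`, hence `[∂_v ∂_w, S] = 2 ∂_v ∂_w`,
while `S (c(τ) f) = τ c'(τ) f + c(τ) S f`. Therefore `P = −A(τ) ∂_τ² − B(τ) ∂_τ + A(τ) Δ` satisfies
`[P, S] = 2P + (B + τB') ∂_τ + τA' (∂_τ² − Δ)`.
For `A = a⁻²`, `B = 2a'/a³` we have `τA' = −2τa'/a · A` and `A (∂_τ² − Δ) = −(□_g + B ∂_τ)`,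
which turns this into the stated formula.
-/

open Function Filter Topology
open scoped ContDiff

section Euler

variable {E : Type*} [NormedAddCommGroup E] [NormedSpace ℝ E] {U : Set E} {f g : E → ℝ} {p : E}

def dirDeriv (v : E) (f : E → ℝ) : E → ℝ := fun p => fderiv ℝ f p v

def euler (f : E → ℝ) : E → ℝ := fun p => fderiv ℝ f p p

theorem ContDiffOn.dirDeriv (hf : ContDiffOn ℝ ∞ f U) (hU : IsOpen U) (v : E) :
    ContDiffOn ℝ ∞ (dirDeriv v f) U :=
  (hf.fderiv_of_isOpen hU (m := ∞) le_rfl).clm_apply contDiffOn_const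

theorem ContDiffOn.euler (hf : ContDiffOn ℝ ∞ f U) (hU : IsOpen U) :
    ContDiffOn ℝ ∞ (euler f) U :=
  (hf.fderiv_of_isOpen hU (m := ∞) le_rfl).clm_apply contDiffOn_id

theorem ContDiffOn.differentiableAt_of_isOpen (hf : ContDiffOn ℝ ∞ f U) (hU : IsOpen U)
    (hp : p ∈ U) : DifferentiableAt ℝ f p :=
  (hf.differentiableOn (by simp)).differentiableAt (hU.mem_nhds hp)

theorem euler_add (hf : DifferentiableAt ℝ f p) (hg : DifferentiableAt ℝ g p) :
    euler (fun q => f q + g q) p = euler f p + euler g p := by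
  simp [euler, fderiv_fun_add hf hg]

theorem euler_sub (hf : DifferentiableAt ℝ f p) (hg : DifferentiableAt ℝ g p) :
    euler (fun q => f q - g q) p = euler f p - euler g p := by
  simp [euler, fderiv_fun_sub hf hg]

theorem euler_neg : euler (fun q => -f q) p = -euler f p := by
  simp [euler]

theorem euler_mul (hf : DifferentiableAt ℝ f p) (hg : DifferentiableAt ℝ g p) :
    euler (fun q => f q * g q) p = euler f p * g p + f p * euler g p := by
  simp [euler, fderiv_fun_mul hf hg, add_comm, mul_comm]

theorem euler_sum {ι : Type*} {s : Finset ι} {F : ι → E → ℝ}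
    (hF : ∀ i ∈ s, DifferentiableAt ℝ (F i) p) :
    euler (fun q => ∑ i ∈ s, F i q) p = ∑ i ∈ s, euler (F i) p := by
  simp [euler, fderiv_fun_sum hF]

theorem deriv_comp_eq_dirDeriv {γ : ℝ → E} {v : E} {t : ℝ} (hγ : HasDerivAt γ v t)
    (hγt : γ t = p) (hfg : f =ᶠ[𝓝 p] g) (hg : DifferentiableAt ℝ g p) :
    deriv (f ∘ γ) t = dirDeriv v g p := by
  subst hγt
  rw [(hfg.comp_tendsto hγ.continuousAt).deriv_eq]
  exact (hg.hasFDerivAt.comp_hasDerivAt t hγ).deriv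

/-- `[∂_v, S] = ∂_v`, by symmetry of the second derivative. -/
theorem dirDeriv_euler (hf : ContDiffAt ℝ 2 f p) (v : E) :
    dirDeriv v (euler f) p = euler (dirDeriv v f) p + dirDeriv v f p := by
  have hd : DifferentiableAt ℝ (fderiv ℝ f) p :=
    (hf.fderiv_right (m := 1) le_rfl).differentiableAt one_ne_zero
  have hsymm := hf.isSymmSndFDerivAt (by rw [minSmoothness_of_isRCLikeNormedField])
  show fderiv ℝ (fun q => fderiv ℝ f q q) p v
    = fderiv ℝ (fun q => fderiv ℝ f q v) p p + fderiv ℝ f p v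
  rw [fderiv_clm_apply hd differentiableAt_fun_id,
    fderiv_clm_apply hd (differentiableAt_const v)]
  simp only [fderiv_fun_id, ContinuousLinearMap.comp_id, add_apply,
    ContinuousLinearMap.flip_apply, hsymm v p, fderiv_fun_const, Pi.zero_apply,
    ContinuousLinearMap.comp_zero, zero_add]
  exact add_comm _ _

theorem dirDeriv_dirDeriv_euler (hf : ContDiffOn ℝ ∞ f U) (hU : IsOpen U) (hp : p ∈ U)
    (v w : E) :
    dirDeriv v (dirDeriv w (euler f)) p
      = euler (dirDeriv v (dirDeriv w f)) p + 2 * dirDeriv v (dirDeriv w f) p := by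
  have hC2 : ∀ h : E → ℝ, ContDiffOn ℝ ∞ h U → ∀ q ∈ U, ContDiffAt ℝ 2 h q := fun h hh q hq =>
    (hh.contDiffAt (hU.mem_nhds hq)).of_le ENat.LEInfty.out
  have hwf : ContDiffOn ℝ ∞ (dirDeriv w f) U := hf.dirDeriv hU w
  have hw : dirDeriv w (euler f) =ᶠ[𝓝 p] fun q => euler (dirDeriv w f) q + dirDeriv w f q := by
    filter_upwards [hU.mem_nhds hp] with q hq using dirDeriv_euler (hC2 f hf q hq) w
  calc dirDeriv v (dirDeriv w (euler f)) p
      = dirDeriv v (euler (dirDeriv w f)) p + dirDeriv v (dirDeriv w f) p := by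
        show fderiv ℝ (dirDeriv w (euler f)) p v
          = fderiv ℝ (euler (dirDeriv w f)) p v + fderiv ℝ (dirDeriv w f) p v
        rw [hw.fderiv_eq, fderiv_fun_add ((hwf.euler hU).differentiableAt_of_isOpen hU hp)
          (hwf.differentiableAt_of_isOpen hU hp)]
        rfl
    _ = _ := by rw [dirDeriv_euler (hC2 _ hwf p hp)]; ring

end Euler

section Spacetime

variable {V : Type*} [NormedAddCommGroup V] [NormedSpace ℝ V] {ι : Type*} [Fintype ι]
  {U : Set (ℝ × V)} {g : ℝ × V → ℝ} {p : ℝ × V}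

theorem euler_comp_fst_mul {c : ℝ → ℝ} (hc : DifferentiableAt ℝ c p.1)
    (hg : DifferentiableAt ℝ g p) :
    euler (fun q => c q.1 * g q) p = p.1 * deriv c p.1 * g p + c p.1 * euler g p := by
  have hc' : HasFDerivAt (fun q : ℝ × V => c q.1)
      (deriv c p.1 • ContinuousLinearMap.fst ℝ ℝ V) p :=
    hc.hasDerivAt.comp_hasFDerivAt p (hasFDerivAt_fst)
  rw [euler_mul hc'.differentiableAt hg]
  simp [euler, hc'.fderiv, mul_comm]

def spatialLap (e : ι → V) (g : ℝ × V → ℝ) : ℝ × V → ℝ :=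
  fun q => ∑ i, dirDeriv (0, e i) (dirDeriv (0, e i) g) q

def waveOp (A B : ℝ → ℝ) (e : ι → V) (g : ℝ × V → ℝ) : ℝ × V → ℝ := fun q =>
  -(A q.1 * dirDeriv (1, 0) (dirDeriv (1, 0) g) q) - B q.1 * dirDeriv (1, 0) g q
    + A q.1 * spatialLap e g q

variable {A B : ℝ → ℝ} {e : ι → V}

theorem ContDiffOn.spatialLap (hg : ContDiffOn ℝ ∞ g U) (hU : IsOpen U) :
    ContDiffOn ℝ ∞ (spatialLap e g) U :=
  ContDiffOn.sum fun _ _ => (hg.dirDeriv hU _).dirDeriv hU _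

theorem ContDiffOn.waveOp (hg : ContDiffOn ℝ ∞ g U) (hU : IsOpen U) {s : Set ℝ}
    (hA : ContDiffOn ℝ ∞ A s) (hB : ContDiffOn ℝ ∞ B s) (hUs : MapsTo Prod.fst U s) :
    ContDiffOn ℝ ∞ (waveOp A B e g) U := by
  have hA' := hA.comp contDiff_fst.contDiffOn hUs
  have hB' := hB.comp contDiff_fst.contDiffOn hUs
  exact ((hA'.mul ((hg.dirDeriv hU _).dirDeriv hU _)).neg.sub
    (hB'.mul (hg.dirDeriv hU _))).add (hA'.mul (hg.spatialLap hU))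

theorem waveOp_euler (hg : ContDiffOn ℝ ∞ g U) (hU : IsOpen U) (hp : p ∈ U) :
    waveOp A B e (euler g) p
      = -(A p.1 * (euler (dirDeriv (1, 0) (dirDeriv (1, 0) g)) p
          + 2 * dirDeriv (1, 0) (dirDeriv (1, 0) g) p))
        - B p.1 * (euler (dirDeriv (1, 0) g) p + dirDeriv (1, 0) g p)
        + A p.1 * (∑ i, euler (dirDeriv (0, e i) (dirDeriv (0, e i) g)) p
          + 2 * spatialLap e g p) := by
  have hC2 : ContDiffAt ℝ 2 g p := (hg.contDiffAt (hU.mem_nhds hp)).of_le ENat.LEInfty.out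
  simp only [waveOp, spatialLap, dirDeriv_dirDeriv_euler hg hU hp, dirDeriv_euler hC2,
    Finset.sum_add_distrib, Finset.mul_sum]

theorem euler_spatialLap (hg : ContDiffOn ℝ ∞ g U) (hU : IsOpen U) (hp : p ∈ U) :
    euler (spatialLap e g) p = ∑ i, euler (dirDeriv (0, e i) (dirDeriv (0, e i) g)) p :=
  euler_sum fun _ _ => ((hg.dirDeriv hU _).dirDeriv hU _).differentiableAt_of_isOpen hU hp

theorem euler_waveOp (hA : DifferentiableAt ℝ A p.1) (hB : DifferentiableAt ℝ B p.1)
    (hg : ContDiffOn ℝ ∞ g U) (hU : IsOpen U) (hp : p ∈ U) :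
    euler (waveOp A B e g) p
      = -(p.1 * deriv A p.1 * dirDeriv (1, 0) (dirDeriv (1, 0) g) p
          + A p.1 * euler (dirDeriv (1, 0) (dirDeriv (1, 0) g)) p)
        - (p.1 * deriv B p.1 * dirDeriv (1, 0) g p + B p.1 * euler (dirDeriv (1, 0) g) p)
        + (p.1 * deriv A p.1 * spatialLap e g p
          + A p.1 * ∑ i, euler (dirDeriv (0, e i) (dirDeriv (0, e i) g)) p) := by
  have hd : ∀ h : ℝ × V → ℝ, ContDiffOn ℝ ∞ h U → DifferentiableAt ℝ h p := fun h hh =>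
    hh.differentiableAt_of_isOpen hU hp
  have hA' : DifferentiableAt ℝ (fun q : ℝ × V => A q.1) p := hA.comp p differentiableAt_fst
  have hB' : DifferentiableAt ℝ (fun q : ℝ × V => B q.1) p := hB.comp p differentiableAt_fst
  have hTT := hd _ ((hg.dirDeriv hU (1, 0)).dirDeriv hU (1, 0))
  have hT := hd _ (hg.dirDeriv hU (1, 0))
  have hL := hd _ (hg.spatialLap (e := e) hU)
  unfold waveOp
  rw [euler_add ((hA'.fun_mul hTT).fun_neg.fun_sub (hB'.fun_mul hT)) (hA'.fun_mul hL),
    euler_sub (hA'.fun_mul hTT).fun_neg (hB'.fun_mul hT), euler_neg, euler_comp_fst_mul hA hTT,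
    euler_comp_fst_mul hB hT, euler_comp_fst_mul hA hL, euler_spatialLap hg hU hp]

theorem waveOp_euler_sub_euler_waveOp (hA : DifferentiableAt ℝ A p.1)
    (hB : DifferentiableAt ℝ B p.1) (hg : ContDiffOn ℝ ∞ g U) (hU : IsOpen U) (hp : p ∈ U) :
    waveOp A B e (euler g) p - euler (waveOp A B e g) p
      = 2 * waveOp A B e g p + (B p.1 + p.1 * deriv B p.1) * dirDeriv (1, 0) g p
        + p.1 * deriv A p.1
          * (dirDeriv (1, 0) (dirDeriv (1, 0) g) p - spatialLap e g p) := by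
  rw [waveOp_euler hg hU hp, euler_waveOp hA hB hg hU hp, waveOp]
  ring

variable {a : ℝ → ℝ}

def flrwBox (a : ℝ → ℝ) (e : ι → V) : (ℝ × V → ℝ) → ℝ × V → ℝ :=
  waveOp (fun s => (a s ^ 2)⁻¹) (fun s => 2 * (deriv a s / a s ^ 3)) e

theorem ContDiffOn.flrwBox (hg : ContDiffOn ℝ ∞ g U) (hU : IsOpen U) {s : Set ℝ}
    (ha : ContDiffOn ℝ ∞ a s) (hs : IsOpen s) (hne : ∀ t ∈ s, a t ≠ 0)
    (hUs : MapsTo Prod.fst U s) : ContDiffOn ℝ ∞ (flrwBox a e g) U :=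
  hg.waveOp hU ((ha.pow 2).inv fun t ht => pow_ne_zero 2 (hne t ht))
    (contDiffOn_const.mul ((ha.deriv_of_isOpen hs le_rfl).div (ha.pow 3)
      fun t ht => pow_ne_zero 3 (hne t ht))) hUs

theorem flrwBox_euler_sub_euler_flrwBox (ha : DifferentiableAt ℝ a p.1)
    (ha' : DifferentiableAt ℝ (deriv a) p.1) (hne : a p.1 ≠ 0) (hg : ContDiffOn ℝ ∞ g U)
    (hU : IsOpen U) (hp : p ∈ U) :
    flrwBox a e (euler g) p - euler (flrwBox a e g) p
      = 2 * (1 + p.1 * deriv a p.1 / a p.1) * flrwBox a e g p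
        + 2 * (deriv a p.1 / a p.1 ^ 3
          + p.1 * (a p.1 * deriv (deriv a) p.1 - deriv a p.1 ^ 2) * (a p.1 ^ 4)⁻¹)
          * dirDeriv (1, 0) g p := by
  have hA := (ha.hasDerivAt.fun_pow 2).fun_inv (pow_ne_zero 2 hne)
  have hB := (ha'.hasDerivAt.fun_div (ha.hasDerivAt.fun_pow 3) (pow_ne_zero 3 hne)).const_mul 2
  rw [flrwBox, waveOp_euler_sub_euler_waveOp hA.differentiableAt hB.differentiableAt hg hU hp,
    hA.deriv, hB.deriv, waveOp]
  field_simp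
  ring

end Spacetime

theorem euler_eq_sum_dirDeriv {ι : Type*} [Fintype ι] [DecidableEq ι] (g : ℝ × (ι → ℝ) → ℝ)
    (q : ℝ × (ι → ℝ)) :
    euler g q = q.1 * dirDeriv (1, 0) g q + ∑ i, q.2 i * dirDeriv (0, Pi.single i 1) g q := by
  have hq : q = q.1 • ((1 : ℝ), (0 : ι → ℝ))
      + ∑ i, q.2 i • ((0 : ℝ), (Pi.single i 1 : ι → ℝ)) := by
    ext j
    · simp [Prod.fst_sum]
    · simp [Prod.snd_sum, Finset.sum_apply, Pi.single_apply]
  calc euler g q = fderiv ℝ g q (q.1 • ((1 : ℝ), (0 : ι → ℝ))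
        + ∑ i, q.2 i • ((0 : ℝ), (Pi.single i 1 : ι → ℝ))) := congrArg (fderiv ℝ g q) hq
    _ = _ := by simp only [map_add, map_sum, map_smul, smul_eq_mul]; rfl

section Fields

variable {U : Set (ℝ × (Fin 3 → ℝ))} {F : Fld} {g : ℝ × (Fin 3 → ℝ) → ℝ}

theorem Set.EqOn.uncurry_dτ (hF : EqOn (uncurry F) g U) (hU : IsOpen U)
    (hg : DifferentiableOn ℝ g U) : EqOn (uncurry (dτ F)) (dirDeriv (1, 0) g) U := by
  rintro ⟨τ, x⟩ hp
  exact deriv_comp_eq_dirDeriv ((hasDerivAt_id τ).prodMk (hasDerivAt_const τ x)) rfl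
    (hF.eventuallyEq_of_mem (hU.mem_nhds hp)) (hg.differentiableAt (hU.mem_nhds hp))

theorem Set.EqOn.uncurry_dx (hF : EqOn (uncurry F) g U) (hU : IsOpen U)
    (hg : DifferentiableOn ℝ g U) (i : Fin 3) :
    EqOn (uncurry (dx i F)) (dirDeriv (0, Pi.single i 1) g) U := by
  rintro ⟨τ, x⟩ hp
  exact deriv_comp_eq_dirDeriv ((hasDerivAt_const (x i) τ).prodMk (hasDerivAt_update x i (x i)))
    (by simp) (hF.eventuallyEq_of_mem (hU.mem_nhds hp)) (hg.differentiableAt (hU.mem_nhds hp))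

theorem Set.EqOn.uncurry_lap (hF : EqOn (uncurry F) g U) (hU : IsOpen U)
    (hg : ContDiffOn ℝ ∞ g U) :
    EqOn (uncurry (lap F)) (spatialLap (Pi.basisFun ℝ (Fin 3)) g) U := by
  rintro ⟨τ, x⟩ hp
  simp only [uncurry_apply_pair, lap, spatialLap]
  refine Finset.sum_congr rfl fun i _ => ?_
  rw [Pi.basisFun_apply]
  exact (hF.uncurry_dx hU (hg.differentiableOn (by simp)) i).uncurry_dx hU
    ((hg.dirDeriv hU _).differentiableOn (by simp)) i hp

theorem Set.EqOn.uncurry_boxc (a : ℝ → ℝ) (hF : EqOn (uncurry F) g U) (hU : IsOpen U)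
    (hg : ContDiffOn ℝ ∞ g U) :
    EqOn (uncurry (boxc a F)) (flrwBox a (Pi.basisFun ℝ (Fin 3)) g) U := by
  rintro ⟨τ, x⟩ hp
  have hT := hF.uncurry_dτ hU (hg.differentiableOn (by simp))
  have hTT := hT.uncurry_dτ hU ((hg.dirDeriv hU _).differentiableOn (by simp))
  simp only [uncurry_apply_pair, boxc, flrwBox, waveOp]
  rw [(show dτ F τ x = _ from hT hp), (show dτ (dτ F) τ x = _ from hTT hp),
    (show lap F τ x = _ from hF.uncurry_lap hU hg hp)]

theorem Set.EqOn.uncurry_scaling (hF : EqOn (uncurry F) g U) (hU : IsOpen U)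
    (hg : DifferentiableOn ℝ g U) :
    EqOn (uncurry fun σ y => σ * dτ F σ y + ∑ i, y i * dx i F σ y) (euler g) U := by
  rintro ⟨τ, x⟩ hp
  rw [euler_eq_sum_dirDeriv]
  simp only [uncurry_apply_pair]
  rw [(show dτ F τ x = _ from hF.uncurry_dτ hU hg hp)]
  congr 1
  exact Finset.sum_congr rfl fun i _ => by rw [(show dx i F τ x = _ from hF.uncurry_dx hU hg i hp)]

theorem Set.EqOn.boxc_scaling_sub_scaling_boxc (a : ℝ → ℝ) (hF : EqOn (uncurry F) g U)
    (hU : IsOpen U) (hg : ContDiffOn ℝ ∞ g U)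
    (hbox : DifferentiableOn ℝ (flrwBox a (Pi.basisFun ℝ (Fin 3)) g) U) {τ : ℝ} {x : Fin 3 → ℝ}
    (hp : (τ, x) ∈ U) :
    boxc a (fun σ y => σ * dτ F σ y + ∑ i, y i * dx i F σ y) τ x
        - (τ * dτ (boxc a F) τ x + ∑ i, x i * dx i (boxc a F) τ x)
      = flrwBox a (Pi.basisFun ℝ (Fin 3)) (euler g) (τ, x)
        - euler (flrwBox a (Pi.basisFun ℝ (Fin 3)) g) (τ, x) := by
  have hboxF := hF.uncurry_boxc a hU hg
  have hdτ : dτ (boxc a F) τ x = dirDeriv (1, 0) (flrwBox a (Pi.basisFun ℝ (Fin 3)) g) (τ, x) :=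
    hboxF.uncurry_dτ hU hbox hp
  have hdx : ∀ i, dx i (boxc a F) τ x
      = dirDeriv (0, Pi.single i 1) (flrwBox a (Pi.basisFun ℝ (Fin 3)) g) (τ, x) :=
    fun i => hboxF.uncurry_dx hU hbox i hp
  rw [euler_eq_sum_dirDeriv, hdτ, Finset.sum_congr rfl fun i _ => by rw [hdx i]]
  congr 1
  exact (hF.uncurry_scaling hU (hg.differentiableOn (by simp))).uncurry_boxc a hU (hg.euler hU) hp

end Fields

/-- `[□_g, S]φ = 2(1 + τ∂_τa/a)□_gφ
+ 2(∂_τa/a³ + τ(a∂_τ²a − (∂_τa)²)a^{−4})∂_τφ`, where `S = τ∂_τ + x^i∂_i`. -/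
theorem stmt10 (a : ℝ → ℝ) (ha : ContDiffOn ℝ (⊤ : ℕ∞) a (Set.Ioi 0))
    (hapos : ∀ τ > (0 : ℝ), 0 < a τ)
    (φ : Fld) (hφ : FSmoothOn (Set.Ioi 0) φ) :
    ∀ τ > (0 : ℝ), ∀ x : Fin 3 → ℝ,
      boxc a (fun σ y => σ * dτ φ σ y + ∑ i, y i * dx i φ σ y) τ x
          - (τ * dτ (boxc a φ) τ x + ∑ i, x i * dx i (boxc a φ) τ x)
        = 2 * (1 + τ * deriv a τ / a τ) * boxc a φ τ x
          + 2 * (deriv a τ / (a τ) ^ 3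
              + τ * (a τ * deriv (deriv a) τ - (deriv a τ) ^ 2) * ((a τ) ^ 4)⁻¹)
              * dτ φ τ x := by
  intro τ hτ x
  have hU : IsOpen (Ioi (0 : ℝ) ×ˢ (univ : Set (Fin 3 → ℝ))) := isOpen_Ioi.prod isOpen_univ
  have hp : ((τ, x) : ℝ × (Fin 3 → ℝ)) ∈ Ioi 0 ×ˢ univ := ⟨hτ, trivial⟩
  have hne : ∀ t ∈ Ioi (0 : ℝ), a t ≠ 0 := fun t ht => (hapos t ht).ne'
  have hφ' : ContDiffOn ℝ ∞ (uncurry φ) (Ioi 0 ×ˢ univ) := hφ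
  have hdiff : ∀ f : ℝ → ℝ, ContDiffOn ℝ ∞ f (Ioi 0) → DifferentiableAt ℝ f τ := fun f hf =>
    (hf.differentiableOn (by simp)).differentiableAt (isOpen_Ioi.mem_nhds hτ)
  have hbox : boxc a φ τ x = flrwBox a (Pi.basisFun ℝ (Fin 3)) (uncurry φ) (τ, x) :=
    (eqOn_refl _ _).uncurry_boxc a hU hφ' hp
  have hdτ : dτ φ τ x = dirDeriv (1, 0) (uncurry φ) (τ, x) :=
    (eqOn_refl _ _).uncurry_dτ hU (hφ'.differentiableOn (by simp)) hp
  rw [(eqOn_refl _ _).boxc_scaling_sub_scaling_boxc a hU hφ'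
      ((hφ'.flrwBox hU ha isOpen_Ioi hne fun q hq => hq.1).differentiableOn (by simp)) hp,
    flrwBox_euler_sub_euler_flrwBox (p := (τ, x)) (hdiff a ha)
      (hdiff _ (ha.deriv_of_isOpen isOpen_Ioi le_rfl)) (hne τ hτ) hφ' hU hp, hbox, hdτ]

end
end
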